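/- arXiv:1305.2036 — 11 statements merged into one kernel-verified Lean document; each statement's English description precedes it below -/
import Mathlib

section
/- If there exist a constant N ≥ 1 and a sequence of positive reals (a_n) with a_n → 0 such that ‖A_m^n x‖ ≤ N a_{m-n} ‖x‖ for all m ≥ n and all x ∈ X, then the system is uniformly exponentially stable, i.e., there exist M ≥ 1 and α > 0 such that ‖A_m^n x‖ ≤ M e^{-α(m-n)} ‖x‖ for all m ≥ n and x ∈ X. -/
open scoped BigOperators

/-- The evolution operator `A_m^n = A(m) ∘ ⋯ ∘ A(n+1)`, with `A_n^n = 1`. -/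
noncomputable def evol {X : Type*} [NormedAddCommGroup X] [NormedSpace ℝ X]
    (A : ℕ → X →L[ℝ] X) (m n : ℕ) : X →L[ℝ] X :=
  ((List.range (m - n)).map (fun k => A (n + k + 1))).foldl (fun P B => B ∘L P) 1

lemma evol_self {X : Type*} [NormedAddCommGroup X] [NormedSpace ℝ X]
    (A : ℕ → X →L[ℝ] X) (n : ℕ) : evol A n n = 1 := by
  simp [evol]

lemma evol_succ {X : Type*} [NormedAddCommGroup X] [NormedSpace ℝ X]
    (A : ℕ → X →L[ℝ] X) {m n : ℕ} (hmn : n ≤ m) :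
    evol A (m + 1) n = A (m + 1) ∘L evol A m n := by
  unfold evol
  have h1 : m + 1 - n = (m - n) + 1 := by omega
  rw [h1, List.range_succ, List.map_append, List.foldl_append]
  have h2 : n + (m - n) + 1 = m + 1 := by omega
  simp [h2]

lemma evol_comp {X : Type*} [NormedAddCommGroup X] [NormedSpace ℝ X]
    (A : ℕ → X →L[ℝ] X) {m p n : ℕ} (hnp : n ≤ p) (hpm : p ≤ m) :
    evol A m p ∘L evol A p n = evol A m n := by
  induction m, hpm using Nat.le_induction with
  | base => rw [evol_self]; exact (evol A p n).comp_id
  | succ m hpm ih =>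
    rw [evol_succ A hpm, evol_succ A (hnp.trans hpm), ContinuousLinearMap.comp_assoc, ih]

theorem stmt0 {X : Type*} [NormedAddCommGroup X] [NormedSpace ℝ X] [CompleteSpace X]
    (A : ℕ → X →L[ℝ] X) (N : ℝ) (a : ℕ → ℝ) (hN : 1 ≤ N)
    (ha : ∀ n, 0 < a n) (hlim : Filter.Tendsto a Filter.atTop (nhds 0))
    (h : ∀ n m : ℕ, n ≤ m → ∀ x : X, ‖evol A m n x‖ ≤ N * a (m - n) * ‖x‖) :
    ∃ M α : ℝ, 1 ≤ M ∧ 0 < α ∧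
      ∀ n m : ℕ, n ≤ m → ∀ x : X,
        ‖evol A m n x‖ ≤ M * Real.exp (-α * ((m : ℝ) - n)) * ‖x‖ := by
  have hN0 : 0 < N := lt_of_lt_of_le one_pos hN
  -- choose k ≥ 1 with N * a k ≤ 1/2
  obtain ⟨k, hk1, hk⟩ : ∃ k : ℕ, 1 ≤ k ∧ N * a k ≤ 1 / 2 := by
    have : ∀ᶠ n in Filter.atTop, a n < 1 / (2 * N) := by
      have := hlim (Metric.ball_mem_nhds 0 (by positivity : (0:ℝ) < 1 / (2 * N)))
      filter_upwards [this] with n hn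
      simpa [Real.dist_eq, abs_of_pos (ha n)] using hn
    obtain ⟨k, hk⟩ := (this.and (Filter.eventually_ge_atTop 1)).exists
    refine ⟨k, hk.2, ?_⟩
    have := hk.1
    rw [lt_div_iff₀ (by positivity)] at this
    nlinarith
  have hk0 : 0 < (k : ℝ) := by exact_mod_cast hk1
  -- half-step estimate
  have step : ∀ n x, ‖evol A (n + k) n x‖ ≤ (1/2) * ‖x‖ := by
    intro n x
    have := h n (n + k) (Nat.le_add_right n k) x
    have hr : n + k - n = k := by omega
    rw [hr] at this
    calc ‖evol A (n + k) n x‖ ≤ N * a k * ‖x‖ := this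
      _ ≤ (1/2) * ‖x‖ := by nlinarith [norm_nonneg x]
  -- iterated estimate
  have iter : ∀ q n (x : X), ‖evol A (n + q * k) n x‖ ≤ (1/2)^q * ‖x‖ := by
    intro q
    induction q with
    | zero => intro n x; simp [evol_self]
    | succ q ih =>
      intro n x
      have heq : n + (q + 1) * k = (n + q * k) + k := by ring
      have hcomp : evol A (n + (q+1) * k) n =
          evol A ((n + q * k) + k) (n + q * k) ∘L evol A (n + q * k) n := by
        rw [evol_comp A (Nat.le_add_right _ _) (by omega), heq]
      rw [hcomp]
      calc ‖evol A ((n + q*k) + k) (n + q*k) (evol A (n + q*k) n x)‖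
          ≤ (1/2) * ‖evol A (n + q*k) n x‖ := step _ _
        _ ≤ (1/2) * ((1/2)^q * ‖x‖) := by
            have := ih n x; linarith
        _ = (1/2)^(q+1) * ‖x‖ := by ring
  -- constant C bounding a on [0, k)
  have hkne : (Finset.range k).Nonempty := Finset.nonempty_range_iff.mpr (by omega)
  set C : ℝ := (Finset.range k).sup' hkne a with hC
  have hC0 : 0 < C := lt_of_lt_of_le (ha 0)
    (Finset.le_sup' a (Finset.mem_range.mpr (by omega)))
  refine ⟨max 1 (2 * N * C), Real.log 2 / k, le_max_left _ _,
    div_pos (Real.log_pos one_lt_two) hk0, ?_⟩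
  intro n m hnm x
  set d := m - n with hd
  set q := d / k with hq
  set r := d % k with hr
  have hrk : r < k := Nat.mod_lt _ (by omega)
  have hdm : k * q + r = d := Nat.div_add_mod d k
  have hdqr : d = q * k + r := by rw [Nat.mul_comm] at hdm; omega
  have hcomp : evol A m n = evol A m (n + q * k) ∘L evol A (n + q * k) n := by
    rw [evol_comp A (Nat.le_add_right _ _) (by omega)]
  have hb1 : ‖evol A m n x‖ ≤ N * a r * ((1/2)^q * ‖x‖) := by
    rw [hcomp]
    have h1 := h (n + q * k) m (by omega) (evol A (n + q * k) n x)
    have hmr : m - (n + q * k) = r := by omega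
    rw [hmr] at h1
    calc ‖evol A m (n + q*k) (evol A (n + q*k) n x)‖
        ≤ N * a r * ‖evol A (n + q*k) n x‖ := h1
      _ ≤ N * a r * ((1/2)^q * ‖x‖) :=
          mul_le_mul_of_nonneg_left (iter q n x) (le_of_lt (mul_pos hN0 (ha r)))
  have haC : a r ≤ C := Finset.le_sup' a (Finset.mem_range.mpr hrk)
  have hb2 : ‖evol A m n x‖ ≤ N * C * ((1/2)^q * ‖x‖) := by
    have hp : (0:ℝ) ≤ (1/2)^q * ‖x‖ := by positivity
    exact hb1.trans
      (mul_le_mul_of_nonneg_right (mul_le_mul_of_nonneg_left haC hN0.le) hp)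
  -- (1/2)^q ≤ 2 * exp (-(log 2 / k) * d)
  have hhalf : ((1:ℝ)/2)^q = Real.exp (-(q : ℝ) * Real.log 2) := by
    rw [← Real.exp_log (by norm_num : (0:ℝ) < 1/2), ← Real.exp_nat_mul]
    congr 1
    rw [Real.log_div one_ne_zero two_ne_zero, Real.log_one]
    ring
  have hqd : (Real.log 2 / k) * d - Real.log 2 ≤ (q : ℝ) * Real.log 2 := by
    have hdk : (d : ℝ) ≤ (q : ℝ) * k + k := by
      have : d < q * k + k := by omega
      exact_mod_cast this.le
    have hlog : (0:ℝ) < Real.log 2 := Real.log_pos one_lt_two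
    rw [div_mul_eq_mul_div, sub_le_iff_le_add, div_le_iff₀ hk0]
    nlinarith
  have hexp : Real.exp (-(q : ℝ) * Real.log 2) ≤
      2 * Real.exp (-(Real.log 2 / k) * d) := by
    have : Real.exp (-(q : ℝ) * Real.log 2) ≤
        Real.exp (Real.log 2 - (Real.log 2 / k) * d) := by
      apply Real.exp_le_exp.mpr; linarith
    calc Real.exp (-(q : ℝ) * Real.log 2)
        ≤ Real.exp (Real.log 2 - (Real.log 2 / k) * d) := this
      _ = 2 * Real.exp (-(Real.log 2 / k) * d) := by
          rw [neg_mul, Real.exp_neg, Real.exp_sub, Real.exp_log two_pos]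
          ring
  have hcast : ((m : ℝ) - n) = (d : ℝ) := by
    rw [hd]; push_cast [Nat.cast_sub hnm]; ring
  rw [hcast]
  calc ‖evol A m n x‖ ≤ N * C * ((1/2)^q * ‖x‖) := hb2
    _ ≤ N * C * (2 * Real.exp (-(Real.log 2 / k) * d) * ‖x‖) := by
        rw [hhalf]
        have hNC : (0:ℝ) ≤ N * C := by positivity
        have hx : (0:ℝ) ≤ ‖x‖ := norm_nonneg x
        nlinarith [hexp, mul_le_mul_of_nonneg_right hexp hx]
    _ = (2 * N * C) * Real.exp (-(Real.log 2 / k) * d) * ‖x‖ := by ring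
    _ ≤ max 1 (2 * N * C) * Real.exp (-(Real.log 2 / k) * d) * ‖x‖ := by
        have hle := le_max_right 1 (2 * N * C)
        gcongr
end

section
/- The system is nonuniformly exponentially stable if and only if there exist a constant d > 0 and a nondecreasing function N : ℝ₊ → [1,∞) such that Σ_{m=n}^∞ e^{d(m-n)} ‖A_m^p x‖ ≤ N(n) ‖A_n^p x‖ for all n ≥ p and x ∈ X. -/
/-!
Only the scalar sequence `m ↦ ‖A_m^p x‖` matters. If it decays like `e^{-α(m-n)}` from `n` on,
then weighting it by `e^{d(m-n)}` with `d < α` leaves a geometric tail of ratio `e^{-(α-d)}`,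
so every partial sum is at most `(1 - e^{-(α-d)})⁻¹` times the bound; take `d = α / 2`.
Conversely a single term of the weighted sum is bounded by the whole sum.
-/

open scoped BigOperators

open Real Finset

lemma sum_Icc_pow_sub_le_inv_one_sub {r : ℝ} (hr0 : 0 ≤ r) (hr1 : r < 1) (n M : ℕ) :
    ∑ m ∈ Icc n M, r ^ (m - n) ≤ (1 - r)⁻¹ := by
  rw [← Ico_add_one_right_eq_Icc, sum_Ico_eq_sum_range, range_eq_Ico]
  simpa only [Nat.add_sub_cancel_left, pow_zero, one_div] using geom_sum_Ico_le_of_lt_one (m := 0) (n := M + 1 - n) hr0 hr1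

lemma sum_Icc_exp_mul_le_of_le_exp_neg {f : ℕ → ℝ} {C α d : ℝ} {n : ℕ} (hdα : d < α)
    (hC : 0 ≤ C) (hf : ∀ m, n ≤ m → f m ≤ C * exp (-α * (m - n))) (M : ℕ) :
    ∑ m ∈ Icc n M, exp (d * (m - n)) * f m ≤ C * (1 - exp (-(α - d)))⁻¹ := by
  set r := exp (-(α - d))
  have hr1 : r < 1 := exp_lt_one_iff.2 (by linarith)
  have hterm : ∀ m ∈ Icc n M, exp (d * (m - n)) * f m ≤ C * r ^ (m - n) := by
    intro m hm
    have hnm := (mem_Icc.1 hm).1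
    calc exp (d * (m - n)) * f m ≤ exp (d * (m - n)) * (C * exp (-α * (m - n))) :=
          mul_le_mul_of_nonneg_left (hf m hnm) (exp_pos _).le
      _ = C * exp (((m - n : ℕ) : ℝ) * -(α - d)) := by
          rw [mul_left_comm, ← exp_add, Nat.cast_sub hnm]; ring_nf
      _ = C * r ^ (m - n) := by rw [exp_nat_mul]
  calc ∑ m ∈ Icc n M, exp (d * (m - n)) * f m ≤ ∑ m ∈ Icc n M, C * r ^ (m - n) :=
        sum_le_sum hterm
    _ = C * ∑ m ∈ Icc n M, r ^ (m - n) := (mul_sum ..).symm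
    _ ≤ C * (1 - r)⁻¹ :=
        mul_le_mul_of_nonneg_left (sum_Icc_pow_sub_le_inv_one_sub (exp_pos _).le hr1 n M) hC

lemma le_mul_exp_neg_of_sum_Icc_exp_mul_le {f : ℕ → ℝ} {d K : ℝ} {n M m : ℕ}
    (hf : ∀ k, 0 ≤ f k) (h : ∑ k ∈ Icc n M, exp (d * (k - n)) * f k ≤ K) (hm : m ∈ Icc n M) :
    f m ≤ K * exp (-d * (m - n)) := by
  have hterm : exp (d * (m - n)) * f m ≤ K :=
    (single_le_sum (f := fun k : ℕ => exp (d * (k - n)) * f k) (fun k _ => mul_nonneg (exp_pos _).le (hf k)) hm).trans h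
  rw [neg_mul, exp_neg, ← div_eq_mul_inv, le_div_iff₀ (exp_pos _), mul_comm]
  exact hterm

lemma one_le_inv_one_sub_exp_neg {a : ℝ} (ha : 0 < a) : 1 ≤ (1 - exp (-a))⁻¹ :=
  one_le_inv₀ (by linarith [exp_lt_one_iff.2 (neg_neg_of_pos ha)]) |>.2 (by linarith [exp_pos (-a)])

theorem stmt8_general {X : Type*} [NormedAddCommGroup X] [NormedSpace ℝ X]
    (A : ℕ → X →L[ℝ] X) :
    (∃ α : ℝ, ∃ N : ℝ → ℝ, 0 < α ∧ MonotoneOn N (Set.Ici 0) ∧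
      (∀ t : ℝ, 0 ≤ t → 1 ≤ N t) ∧
      ∀ p n m : ℕ, p ≤ n → n ≤ m → ∀ x : X,
        ‖evol A m p x‖ ≤ N n * Real.exp (-α * ((m : ℝ) - n)) * ‖evol A n p x‖) ↔
    (∃ d : ℝ, ∃ N : ℝ → ℝ, 0 < d ∧ MonotoneOn N (Set.Ici 0) ∧
      (∀ t : ℝ, 0 ≤ t → 1 ≤ N t) ∧
      ∀ p n : ℕ, p ≤ n → ∀ x : X, ∀ M : ℕ, n ≤ M →
        ∑ m ∈ Finset.Icc n M, Real.exp (d * ((m : ℝ) - n)) * ‖evol A m p x‖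
          ≤ N n * ‖evol A n p x‖) := by
  constructor
  · rintro ⟨α, N, hα, hmono, hN1, hbound⟩
    set c := (1 - exp (-(α - α / 2)))⁻¹
    have hc : 1 ≤ c := one_le_inv_one_sub_exp_neg (by linarith)
    refine ⟨α / 2, fun t => N t * c, half_pos hα,
      fun a ha b hb hab => mul_le_mul_of_nonneg_right (hmono ha hb hab) (by linarith),
      fun t ht => (hN1 t ht).trans (le_mul_of_one_le_right (by linarith [hN1 t ht]) hc), fun p n hpn x M _ => ?_⟩
    have hNn : 0 ≤ N n := zero_le_one.trans (hN1 n n.cast_nonneg)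
    calc _ ≤ N n * ‖evol A n p x‖ * c :=
          sum_Icc_exp_mul_le_of_le_exp_neg (by linarith) (by positivity)
            (fun m hnm => (hbound p n m hpn hnm x).trans_eq (by ring)) M
      _ = N n * c * ‖evol A n p x‖ := by ring
  · rintro ⟨d, N, hd, hmono, hN1, hbound⟩
    refine ⟨d, N, hd, hmono, hN1, fun p n m hpn hnm x => ?_⟩
    calc _ ≤ N n * ‖evol A n p x‖ * exp (-d * (m - n)) :=
          le_mul_exp_neg_of_sum_Icc_exp_mul_le (fun _ => norm_nonneg _)
            (hbound p n hpn x m hnm) (mem_Icc.2 ⟨hnm, le_rfl⟩)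
      _ = _ := by ring

theorem stmt8 {X : Type*} [NormedAddCommGroup X] [NormedSpace ℝ X] [CompleteSpace X]
    (A : ℕ → X →L[ℝ] X) :
    (∃ α : ℝ, ∃ N : ℝ → ℝ, 0 < α ∧ MonotoneOn N (Set.Ici 0) ∧
      (∀ t : ℝ, 0 ≤ t → 1 ≤ N t) ∧
      ∀ p n m : ℕ, p ≤ n → n ≤ m → ∀ x : X,
        ‖evol A m p x‖ ≤ N n * Real.exp (-α * ((m : ℝ) - n)) * ‖evol A n p x‖) ↔
    (∃ d : ℝ, ∃ N : ℝ → ℝ, 0 < d ∧ MonotoneOn N (Set.Ici 0) ∧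
      (∀ t : ℝ, 0 ≤ t → 1 ≤ N t) ∧
      ∀ p n : ℕ, p ≤ n → ∀ x : X, ∀ M : ℕ, n ≤ M →
        ∑ m ∈ Finset.Icc n M, Real.exp (d * ((m : ℝ) - n)) * ‖evol A m p x‖
          ≤ N n * ‖evol A n p x‖) :=
  stmt8_general A
end

section
/- If there exist b > 0 and a nondecreasing function N : ℝ₊ → [1,∞) such that Σ_{k=n}^m e^{b(m-k)} ‖(A_m^k)* x*‖ ≤ N(n) ‖x*‖ for all m ≥ n and x* ∈ X*, then the system is nonuniformly exponentially stable. -/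
open scoped BigOperators

theorem ContinuousLinearMap.norm_apply_le_of_norm_comp_le {𝕜 E F : Type*} [RCLike 𝕜]
    [SeminormedAddCommGroup E] [NormedSpace 𝕜 E] [SeminormedAddCommGroup F] [NormedSpace 𝕜 F]
    {T : E →L[𝕜] F} {C : ℝ} (hC : 0 ≤ C) (hT : ∀ f : StrongDual 𝕜 F, ‖f.comp T‖ ≤ C * ‖f‖)
    (x : E) : ‖T x‖ ≤ C * ‖x‖ := by
  refine NormedSpace.norm_le_dual_bound 𝕜 (T x) (by positivity) fun f => ?_
  calc ‖f (T x)‖ = ‖f.comp T x‖ := rfl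
    _ ≤ ‖f.comp T‖ * ‖x‖ := (f.comp T).le_opNorm x
    _ ≤ C * ‖f‖ * ‖x‖ := by gcongr; exact hT f
    _ = C * ‖x‖ * ‖f‖ := by ring

theorem norm_comp_evol_le_of_sum_le {X : Type*} [NormedAddCommGroup X] [NormedSpace ℝ X]
    {A : ℕ → X →L[ℝ] X} {b C : ℝ} {n m : ℕ} (hnm : n ≤ m) {xs : StrongDual ℝ X}
    (h : ∑ k ∈ Finset.Icc n m, Real.exp (b * ((m : ℝ) - k)) * ‖xs.comp (evol A m k)‖ ≤ C) :
    ‖xs.comp (evol A m n)‖ ≤ C * Real.exp (-b * ((m : ℝ) - n)) := by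
  have hdiag : Real.exp (b * ((m : ℝ) - n)) * ‖xs.comp (evol A m n)‖ ≤ C :=
    (Finset.single_le_sum (f := fun k : ℕ => Real.exp (b * ((m : ℝ) - k)) * ‖xs.comp (evol A m k)‖)
      (fun k _ => by positivity) (Finset.mem_Icc.mpr ⟨le_rfl, hnm⟩)).trans h
  rw [neg_mul, Real.exp_neg, ← div_eq_mul_inv, le_div_iff₀ (Real.exp_pos _)]
  linarith

theorem stmt9_general {X : Type*} [NormedAddCommGroup X] [NormedSpace ℝ X]
    (A : ℕ → X →L[ℝ] X) (b : ℝ) (N : ℝ → ℝ) (hb : 0 < b)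
    (hmono : MonotoneOn N (Set.Ici 0)) (hN1 : ∀ t : ℝ, 0 ≤ t → 1 ≤ N t)
    (h : ∀ n m : ℕ, n ≤ m → ∀ xs : X →L[ℝ] ℝ,
      ∑ k ∈ Finset.Icc n m, Real.exp (b * ((m : ℝ) - k)) * ‖xs.comp (evol A m k)‖
        ≤ N n * ‖xs‖) :
    ∃ α : ℝ, ∃ M : ℝ → ℝ, 0 < α ∧ MonotoneOn M (Set.Ici 0) ∧
      (∀ t : ℝ, 0 ≤ t → 1 ≤ M t) ∧
      ∀ n m : ℕ, n ≤ m → ∀ x : X,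
        ‖evol A m n x‖ ≤ M n * Real.exp (-α * ((m : ℝ) - n)) * ‖x‖ := by
  refine ⟨b, N, hb, hmono, hN1, fun n m hnm x => ?_⟩
  have hNn : 0 ≤ N n := zero_le_one.trans (hN1 n n.cast_nonneg)
  refine ContinuousLinearMap.norm_apply_le_of_norm_comp_le (by positivity) (fun xs => ?_) x
  calc ‖xs.comp (evol A m n)‖ ≤ N n * ‖xs‖ * Real.exp (-b * ((m : ℝ) - n)) :=
        norm_comp_evol_le_of_sum_le hnm (h n m hnm xs)
    _ = N n * Real.exp (-b * ((m : ℝ) - n)) * ‖xs‖ := by ring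

theorem stmt9 {X : Type*} [NormedAddCommGroup X] [NormedSpace ℝ X] [CompleteSpace X]
    (A : ℕ → X →L[ℝ] X) (b : ℝ) (N : ℝ → ℝ) (hb : 0 < b)
    (hmono : MonotoneOn N (Set.Ici 0)) (hN1 : ∀ t : ℝ, 0 ≤ t → 1 ≤ N t)
    (h : ∀ n m : ℕ, n ≤ m → ∀ xs : X →L[ℝ] ℝ,
      ∑ k ∈ Finset.Icc n m, Real.exp (b * ((m : ℝ) - k)) * ‖xs.comp (evol A m k)‖
        ≤ N n * ‖xs‖) :
    ∃ α : ℝ, ∃ M : ℝ → ℝ, 0 < α ∧ MonotoneOn M (Set.Ici 0) ∧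
      (∀ t : ℝ, 0 ≤ t → 1 ≤ M t) ∧
      ∀ n m : ℕ, n ≤ m → ∀ x : X,
        ‖evol A m n x‖ ≤ M n * Real.exp (-α * ((m : ℝ) - n)) * ‖x‖ :=
  stmt9_general A b N hb hmono hN1 h
end

section
/- The system is exponentially stable if and only if there exist constants N ≥ 1, ν > 0 and β ∈ [0, ν) such that ‖A_m^p x‖ ≤ N e^{-ν(m-n)} e^{β m} ‖A_n^p x‖ for all m ≥ n ≥ p and x ∈ X. -/
open scoped BigOperators

theorem stmt10 {X : Type*} [NormedAddCommGroup X] [NormedSpace ℝ X] [CompleteSpace X]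
    (A : ℕ → X →L[ℝ] X) :
    (∃ N α β : ℝ, 1 ≤ N ∧ 0 < α ∧ 0 ≤ β ∧
      ∀ p n m : ℕ, p ≤ n → n ≤ m → ∀ x : X,
        ‖evol A m p x‖ ≤ N * Real.exp (-α * ((m : ℝ) - n)) * Real.exp (β * n) * ‖evol A n p x‖) ↔
    (∃ N ν β : ℝ, 1 ≤ N ∧ 0 < ν ∧ 0 ≤ β ∧ β < ν ∧
      ∀ p n m : ℕ, p ≤ n → n ≤ m → ∀ x : X,
        ‖evol A m p x‖ ≤ N * Real.exp (-ν * ((m : ℝ) - n)) * Real.exp (β * m) * ‖evol A n p x‖) := by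
  constructor
  · rintro ⟨N, α, β, hN, hα, hβ, h⟩
    refine ⟨N, α + β, β, hN, by linarith, hβ, by linarith, fun p n m hpn hnm x => ?_⟩
    have key : N * Real.exp (-(α + β) * ((m : ℝ) - n)) * Real.exp (β * m)
        = N * Real.exp (-α * ((m : ℝ) - n)) * Real.exp (β * n) := by
      rw [mul_assoc, mul_assoc, ← Real.exp_add, ← Real.exp_add]
      ring_nf
    rw [key]
    exact h p n m hpn hnm x
  · rintro ⟨N, ν, β, hN, hν, hβ, hβν, h⟩
    refine ⟨N, ν - β, β, hN, by linarith, hβ, fun p n m hpn hnm x => ?_⟩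
    have key : N * Real.exp (-(ν - β) * ((m : ℝ) - n)) * Real.exp (β * n)
        = N * Real.exp (-ν * ((m : ℝ) - n)) * Real.exp (β * m) := by
      rw [mul_assoc, mul_assoc, ← Real.exp_add, ← Real.exp_add]
      ring_nf
    rw [key]
    exact h p n m hpn hnm x
end

section
/- The system is exponentially stable if and only if there exist constants N ≥ 1, ν > 0 and δ ∈ (0, ν] such that ‖A_m^p x‖ ≤ N e^{-δ m} e^{ν n} ‖A_n^p x‖ for all m ≥ n ≥ p and x ∈ X. -/
open scoped BigOperators

theorem stmt11 {X : Type*} [NormedAddCommGroup X] [NormedSpace ℝ X] [CompleteSpace X]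
    (A : ℕ → X →L[ℝ] X) :
    (∃ N α β : ℝ, 1 ≤ N ∧ 0 < α ∧ 0 ≤ β ∧
      ∀ p n m : ℕ, p ≤ n → n ≤ m → ∀ x : X,
        ‖evol A m p x‖ ≤ N * Real.exp (-α * ((m : ℝ) - n)) * Real.exp (β * n) * ‖evol A n p x‖) ↔
    (∃ N ν δ : ℝ, 1 ≤ N ∧ 0 < ν ∧ 0 < δ ∧ δ ≤ ν ∧
      ∀ p n m : ℕ, p ≤ n → n ≤ m → ∀ x : X,
        ‖evol A m p x‖ ≤ N * Real.exp (-δ * m) * Real.exp (ν * n) * ‖evol A n p x‖) := by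
  constructor
  · rintro ⟨N, α, β, hN, hα, hβ, h⟩
    refine ⟨N, α + β, α, hN, by linarith, hα, by linarith, ?_⟩
    intro p n m hpn hnm x
    have := h p n m hpn hnm x
    have heq : N * Real.exp (-α * (m : ℝ)) * Real.exp ((α + β) * n)
        = N * Real.exp (-α * ((m : ℝ) - n)) * Real.exp (β * n) := by
      rw [mul_assoc, mul_assoc, ← Real.exp_add, ← Real.exp_add]
      ring_nf
    rw [heq]; exact this
  · rintro ⟨N, ν, δ, hN, hν, hδ, hδν, h⟩
    refine ⟨N, δ, ν - δ, hN, hδ, by linarith, ?_⟩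
    intro p n m hpn hnm x
    have := h p n m hpn hnm x
    have heq : N * Real.exp (-δ * ((m : ℝ) - n)) * Real.exp ((ν - δ) * n)
        = N * Real.exp (-δ * m) * Real.exp (ν * n) := by
      rw [mul_assoc, mul_assoc, ← Real.exp_add, ← Real.exp_add]
      ring_nf
    rw [heq]; exact this
end

section
/- The system is exponentially stable if and only if there exist constants B ≥ 1, b > 0 and c ∈ [0, b) such that Σ_{k=0}^m e^{b(m-k)} ‖(A_m^k)* x*‖ ≤ B e^{c m} ‖x*‖ for all m ∈ ℕ and x* ∈ X*. -/
open scoped BigOperators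

/-!
Neither direction uses the cocycle structure of `evol`: both are estimates for an arbitrary
two-parameter family of operators `T m n`.

(⇒) With `b = α + β + 1` and `c = β + 1` the exponents combine to
`b (m - k) - α (m - k) + β k = c m - k`, so the sum is dominated by `N e^{c m} ‖x*‖ ∑ e^{-k}`.

(⇐) A single summand bounds `‖(T m n)* x*‖`, and by Hahn–Banach the dual operator has the
same norm as `T m n`, whence `‖T m n‖ ≤ B e^{c m - b (m - n)} = B e^{-(b - c)(m - n)} e^{c n}`.
-/

open Real Finset

lemma sum_range_exp_neg_one_pow_le_two (n : ℕ) : ∑ k ∈ range n, exp (-1) ^ k ≤ 2 := by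
  have h : exp (-1) ≤ 1 / 2 := by
    rw [exp_neg, one_div]
    exact inv_anti₀ two_pos (by linarith [add_one_le_exp (1 : ℝ)])
  calc ∑ k ∈ range n, exp (-1) ^ k
      ≤ ∑ k ∈ range n, (1 / 2 : ℝ) ^ k := by gcongr
    _ ≤ 2 := sum_geometric_two_le n

section

variable {𝕜 E F : Type*} [RCLike 𝕜] [NormedAddCommGroup E] [NormedSpace 𝕜 E]
  [NormedAddCommGroup F] [NormedSpace 𝕜 F]

lemma ContinuousLinearMap.opNorm_le_of_norm_comp_le (T : E →L[𝕜] F) {M : ℝ} (hM : 0 ≤ M)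
    (h : ∀ f : StrongDual 𝕜 F, ‖f.comp T‖ ≤ M * ‖f‖) : ‖T‖ ≤ M :=
  T.opNorm_le_bound hM fun x =>
    NormedSpace.norm_le_dual_bound 𝕜 (T x) (by positivity) fun f =>
      calc ‖f (T x)‖ ≤ ‖f.comp T‖ * ‖x‖ := (f.comp T).le_opNorm x
        _ ≤ M * ‖f‖ * ‖x‖ := by gcongr; exact h f
        _ = M * ‖x‖ * ‖f‖ := by ring

lemma sum_exp_mul_norm_comp_le_of_opNorm_le {T : ℕ → ℕ → E →L[𝕜] F} {N α β : ℝ}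
    (hN : 0 ≤ N)
    (hT : ∀ n m : ℕ, n ≤ m → ‖T m n‖ ≤ N * exp (-α * ((m : ℝ) - n)) * exp (β * n))
    (m : ℕ) (f : StrongDual 𝕜 F) :
    ∑ k ∈ range (m + 1), exp ((α + β + 1) * ((m : ℝ) - k)) * ‖f.comp (T m k)‖
      ≤ 2 * N * exp ((β + 1) * m) * ‖f‖ := by
  have hterm : ∀ k ∈ range (m + 1),
      exp ((α + β + 1) * ((m : ℝ) - k)) * ‖f.comp (T m k)‖
        ≤ N * exp ((β + 1) * m) * ‖f‖ * exp (-1) ^ k := by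
    intro k hk
    have hkm : k ≤ m := Nat.lt_succ_iff.mp (mem_range.mp hk)
    have hexp : exp ((α + β + 1) * ((m : ℝ) - k)) * exp (-α * ((m : ℝ) - k)) * exp (β * k)
        = exp ((β + 1) * m) * exp (-1) ^ k := by
      rw [← exp_nat_mul, ← exp_add, ← exp_add, ← exp_add]
      ring_nf
    calc exp ((α + β + 1) * ((m : ℝ) - k)) * ‖f.comp (T m k)‖
        ≤ exp ((α + β + 1) * ((m : ℝ) - k))
            * (‖f‖ * (N * exp (-α * ((m : ℝ) - k)) * exp (β * k))) := by
          gcongr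
          exact (f.opNorm_comp_le _).trans (by gcongr; exact hT k m hkm)
      _ = N * exp ((β + 1) * m) * ‖f‖ * exp (-1) ^ k := by
          linear_combination (N * ‖f‖) * hexp
  calc ∑ k ∈ range (m + 1), exp ((α + β + 1) * ((m : ℝ) - k)) * ‖f.comp (T m k)‖
      ≤ N * exp ((β + 1) * m) * ‖f‖ * ∑ k ∈ range (m + 1), exp (-1) ^ k := by
        rw [mul_sum]
        exact sum_le_sum hterm
    _ ≤ N * exp ((β + 1) * m) * ‖f‖ * 2 := by
        gcongr
        exact sum_range_exp_neg_one_pow_le_two _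
    _ = 2 * N * exp ((β + 1) * m) * ‖f‖ := by ring

lemma opNorm_le_of_sum_exp_mul_norm_comp_le {T : ℕ → ℕ → E →L[𝕜] F} {B b c : ℝ}
    (hB : 0 ≤ B)
    (hsum : ∀ (m : ℕ) (f : StrongDual 𝕜 F),
      ∑ k ∈ range (m + 1), exp (b * ((m : ℝ) - k)) * ‖f.comp (T m k)‖
        ≤ B * exp (c * m) * ‖f‖)
    {n m : ℕ} (hnm : n ≤ m) :
    ‖T m n‖ ≤ B * exp (-(b - c) * ((m : ℝ) - n)) * exp (c * n) := by
  refine (T m n).opNorm_le_of_norm_comp_le (by positivity) fun f => ?_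
  have hsingle : exp (b * ((m : ℝ) - n)) * ‖f.comp (T m n)‖ ≤ B * exp (c * m) * ‖f‖ :=
    (single_le_sum (f := fun k : ℕ => exp (b * ((m : ℝ) - k)) * ‖f.comp (T m k)‖)
      (fun k _ => by positivity) (mem_range.mpr (Nat.lt_succ_of_le hnm))).trans (hsum m f)
  have hexp : exp (b * ((m : ℝ) - n)) * exp (-(b - c) * ((m : ℝ) - n)) * exp (c * n)
      = exp (c * m) := by
    rw [← exp_add, ← exp_add]
    ring_nf
  refine le_of_mul_le_mul_left (hsingle.trans_eq ?_) (exp_pos (b * ((m : ℝ) - n)))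
  linear_combination -(B * ‖f‖) * hexp

end

theorem stmt13_general {X : Type*} [NormedAddCommGroup X] [NormedSpace ℝ X]
    (A : ℕ → X →L[ℝ] X) :
    (∃ N α β : ℝ, 1 ≤ N ∧ 0 < α ∧ 0 ≤ β ∧
      ∀ n m : ℕ, n ≤ m → ∀ x : X,
        ‖evol A m n x‖ ≤ N * Real.exp (-α * ((m : ℝ) - n)) * Real.exp (β * n) * ‖x‖) ↔
    (∃ B b c : ℝ, 1 ≤ B ∧ 0 < b ∧ 0 ≤ c ∧ c < b ∧
      ∀ m : ℕ, ∀ xs : X →L[ℝ] ℝ,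
        ∑ k ∈ Finset.range (m + 1),
          Real.exp (b * ((m : ℝ) - k)) * ‖xs.comp (evol A m k)‖
            ≤ B * Real.exp (c * m) * ‖xs‖) := by
  constructor
  · rintro ⟨N, α, β, hN, hα, hβ, hA⟩
    refine ⟨2 * N, α + β + 1, β + 1, by linarith, by linarith, by linarith, by linarith, ?_⟩
    exact sum_exp_mul_norm_comp_le_of_opNorm_le (by linarith)
      fun n m hnm => (evol A m n).opNorm_le_bound (by positivity) (hA n m hnm)
  · rintro ⟨B, b, c, hB, -, hc, hcb, hsum⟩
    refine ⟨B, b - c, c, hB, by linarith, hc, fun n m hnm x => ?_⟩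
    exact (evol A m n).le_of_opNorm_le
      (opNorm_le_of_sum_exp_mul_norm_comp_le (by linarith) hsum hnm) x

theorem stmt13 {X : Type*} [NormedAddCommGroup X] [NormedSpace ℝ X] [CompleteSpace X]
    (A : ℕ → X →L[ℝ] X) :
    (∃ N α β : ℝ, 1 ≤ N ∧ 0 < α ∧ 0 ≤ β ∧
      ∀ n m : ℕ, n ≤ m → ∀ x : X,
        ‖evol A m n x‖ ≤ N * Real.exp (-α * ((m : ℝ) - n)) * Real.exp (β * n) * ‖x‖) ↔
    (∃ B b c : ℝ, 1 ≤ B ∧ 0 < b ∧ 0 ≤ c ∧ c < b ∧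
      ∀ m : ℕ, ∀ xs : X →L[ℝ] ℝ,
        ∑ k ∈ Finset.range (m + 1),
          Real.exp (b * ((m : ℝ) - k)) * ‖xs.comp (evol A m k)‖
            ≤ B * Real.exp (c * m) * ‖xs‖) :=
  stmt13_general A
end

section
/- The system is strongly exponentially stable if and only if there exist constants D ≥ 1 and 0 ≤ c < d such that Σ_{m=n}^∞ e^{d(m-n)} ‖A_m^n x‖ ≤ D e^{c n} ‖x‖ for all n ∈ ℕ and x ∈ X. -/
open scoped BigOperators

/-!
If `‖A_m^n x‖ ≤ N e^{-α(m-n)} e^{βn} ‖x‖`, weighting by `e^{d(m-n)}` with `β < d < α` leaves a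
geometric series of ratio `e^{d-α} < 1`, so the weighted sums are bounded by
`N (1 - e^{d-α})⁻¹ e^{βn} ‖x‖`. Conversely, a single term of the weighted sum is already bounded
by the whole sum, which gives the exponential decay with rate `d` and growth `c`.
-/

open Finset Real

lemma sum_Icc_exp_mul_sub_le {γ : ℝ} (hγ : γ < 0) (n M : ℕ) :
    ∑ m ∈ Icc n M, exp (γ * ((m : ℝ) - n)) ≤ (1 - exp γ)⁻¹ := by
  rw [← Ico_add_one_right_eq_Icc, sum_Ico_eq_sum_range]
  have hpow : ∀ k : ℕ, exp (γ * (((n + k : ℕ) : ℝ) - n)) = exp γ ^ k := fun k => by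
    rw [← exp_nat_mul]; push_cast; ring_nf
  simp only [hpow, range_eq_Ico]
  calc ∑ k ∈ Ico 0 (M + 1 - n), exp γ ^ k ≤ exp γ ^ 0 / (1 - exp γ) :=
        geom_sum_Ico_le_of_lt_one (exp_pos γ).le (Real.exp_lt_one_iff.mpr hγ)
    _ = (1 - exp γ)⁻¹ := by rw [pow_zero, one_div]

lemma sum_Icc_exp_mul_le_of_le_exp {a : ℕ → ℝ} {K α d : ℝ} (hd : d < α) (hK : 0 ≤ K) {n : ℕ}
    (ha : ∀ m, n ≤ m → a m ≤ K * exp (-α * ((m : ℝ) - n))) (M : ℕ) :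
    ∑ m ∈ Icc n M, exp (d * ((m : ℝ) - n)) * a m ≤ K * (1 - exp (d - α))⁻¹ :=
  calc ∑ m ∈ Icc n M, exp (d * ((m : ℝ) - n)) * a m
      ≤ ∑ m ∈ Icc n M, K * exp ((d - α) * ((m : ℝ) - n)) :=
        sum_le_sum fun m hm => by
          calc exp (d * ((m : ℝ) - n)) * a m
              ≤ exp (d * ((m : ℝ) - n)) * (K * exp (-α * ((m : ℝ) - n))) :=
                mul_le_mul_of_nonneg_left (ha m (mem_Icc.mp hm).1) (exp_pos _).le
            _ = K * exp ((d - α) * ((m : ℝ) - n)) := by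
                rw [mul_left_comm, ← exp_add]; ring_nf
    _ = K * ∑ m ∈ Icc n M, exp ((d - α) * ((m : ℝ) - n)) := (mul_sum _ _ _).symm
    _ ≤ K * (1 - exp (d - α))⁻¹ :=
        mul_le_mul_of_nonneg_left (sum_Icc_exp_mul_sub_le (by linarith) n M) hK

lemma le_mul_exp_of_sum_Icc_exp_mul_le {a : ℕ → ℝ} (ha : ∀ m, 0 ≤ a m) {d S : ℝ} {n M : ℕ}
    (hnM : n ≤ M) (h : ∑ m ∈ Icc n M, exp (d * ((m : ℝ) - n)) * a m ≤ S) :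
    a M ≤ S * exp (-d * ((M : ℝ) - n)) := by
  have hterm : exp (d * ((M : ℝ) - n)) * a M ≤ S :=
    (single_le_sum (f := fun m : ℕ => exp (d * ((m : ℝ) - n)) * a m)
      (fun m _ => mul_nonneg (exp_pos _).le (ha m))
      (mem_Icc.mpr ⟨hnM, le_rfl⟩)).trans h
  rw [neg_mul, exp_neg, ← div_eq_mul_inv, le_div_iff₀ (exp_pos _), mul_comm]
  exact hterm

theorem stmt15_general {X : Type*} [NormedAddCommGroup X] [NormedSpace ℝ X]
    (A : ℕ → X →L[ℝ] X) :
    (∃ N α β : ℝ, 1 ≤ N ∧ 0 < α ∧ 0 ≤ β ∧ β < α ∧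
      ∀ n m : ℕ, n ≤ m → ∀ x : X,
        ‖evol A m n x‖ ≤ N * Real.exp (-α * ((m : ℝ) - n)) * Real.exp (β * n) * ‖x‖) ↔
    (∃ D d c : ℝ, 1 ≤ D ∧ 0 ≤ c ∧ c < d ∧
      ∀ n : ℕ, ∀ x : X, ∀ M : ℕ, n ≤ M →
        ∑ m ∈ Finset.Icc n M, Real.exp (d * ((m : ℝ) - n)) * ‖evol A m n x‖
          ≤ D * Real.exp (c * n) * ‖x‖) := by
  constructor
  · rintro ⟨N, α, β, hN, -, hβ, hβα, h⟩
    obtain ⟨d, hβd, hdα⟩ := exists_between hβα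
    have hgap : 0 < 1 - exp (d - α) := sub_pos.mpr (Real.exp_lt_one_iff.mpr (sub_neg.mpr hdα))
    have hD : 1 ≤ N * (1 - exp (d - α))⁻¹ :=
      one_le_mul_of_one_le_of_one_le hN
        ((one_le_inv₀ hgap).mpr (sub_le_self _ (exp_pos _).le))
    refine ⟨N * (1 - exp (d - α))⁻¹, d, β, hD, hβ, hβd, fun n x M _ => ?_⟩
    calc ∑ m ∈ Icc n M, exp (d * ((m : ℝ) - n)) * ‖evol A m n x‖
        ≤ N * exp (β * n) * ‖x‖ * (1 - exp (d - α))⁻¹ :=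
          sum_Icc_exp_mul_le_of_le_exp hdα (by positivity)
            (fun m hnm => (h n m hnm x).trans_eq (by ring)) M
      _ = N * (1 - exp (d - α))⁻¹ * exp (β * n) * ‖x‖ := by ring
  · rintro ⟨D, d, c, hD, hc, hcd, h⟩
    refine ⟨D, d, c, hD, by linarith, hc, hcd, fun n m hnm x => ?_⟩
    calc ‖evol A m n x‖ ≤ D * exp (c * n) * ‖x‖ * exp (-d * ((m : ℝ) - n)) :=
          le_mul_exp_of_sum_Icc_exp_mul_le (a := fun k => ‖evol A k n x‖)
            (fun _ => norm_nonneg _) hnm (h n x m hnm)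
      _ = D * exp (-d * ((m : ℝ) - n)) * exp (c * n) * ‖x‖ := by ring

theorem stmt15 {X : Type*} [NormedAddCommGroup X] [NormedSpace ℝ X] [CompleteSpace X]
    (A : ℕ → X →L[ℝ] X) :
    (∃ N α β : ℝ, 1 ≤ N ∧ 0 < α ∧ 0 ≤ β ∧ β < α ∧
      ∀ n m : ℕ, n ≤ m → ∀ x : X,
        ‖evol A m n x‖ ≤ N * Real.exp (-α * ((m : ℝ) - n)) * Real.exp (β * n) * ‖x‖) ↔
    (∃ D d c : ℝ, 1 ≤ D ∧ 0 ≤ c ∧ c < d ∧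
      ∀ n : ℕ, ∀ x : X, ∀ M : ℕ, n ≤ M →
        ∑ m ∈ Finset.Icc n M, Real.exp (d * ((m : ℝ) - n)) * ‖evol A m n x‖
          ≤ D * Real.exp (c * n) * ‖x‖) :=
  stmt15_general A
end

section
/- The system is strongly exponentially stable if and only if there exist constants B ≥ 1, b > 0 and c ≥ 0 with 2c < b such that Σ_{k=0}^m e^{b(m-k)} ‖(A_m^k)* x*‖ ≤ B e^{c m} ‖x*‖ for all m ∈ ℕ and x* ∈ X*. -/
open scoped BigOperators

/-!
Since `‖x* ∘ T‖ ≤ ‖x*‖ ‖T‖` and, by Hahn–Banach, `‖T x‖ = sup_{‖x*‖ ≤ 1} |x* (T x)|`, an estimate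
on `A_m^n` is the same as the corresponding estimate on its adjoint. Given s.e.s., the weight
`e^{(α+β)(m-k)}` turns every term of the sum into at most `N e^{βm} ‖x*‖`, and the `m + 1` terms
are absorbed into `e^{εm}` for any `ε > 0`; then `2(β + ε) < α + β` once `ε < (α - β)/2`.
Conversely, the single term `k = n` of the sum gives s.e.s. with exponents `b - c` and `c`.
-/

open Real Finset

lemma natCast_add_one_le_mul_exp {ε : ℝ} (hε : 0 < ε) (m : ℕ) :
    (m : ℝ) + 1 ≤ (1 + 1 / ε) * exp (ε * m) := by
  have h_one : 1 ≤ exp (ε * m) := one_le_exp (by positivity)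
  have h_lin : ε * m ≤ exp (ε * m) := by linarith [add_one_le_exp (ε * m)]
  have h_m : (m : ℝ) ≤ exp (ε * m) / ε := by rw [le_div_iff₀ hε]; linarith
  calc (m : ℝ) + 1 ≤ exp (ε * m) / ε + exp (ε * m) := by linarith
    _ = (1 + 1 / ε) * exp (ε * m) := by ring

section

variable {E F : Type*} [NormedAddCommGroup E] [NormedSpace ℝ E]
  [NormedAddCommGroup F] [NormedSpace ℝ F] {T : ℕ → ℕ → E →L[ℝ] F}

lemma norm_comp_le_of_forall_norm_apply_le {L : E →L[ℝ] F} {C : ℝ} (hC : 0 ≤ C)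
    (hL : ∀ x, ‖L x‖ ≤ C * ‖x‖) (f : F →L[ℝ] ℝ) : ‖f.comp L‖ ≤ C * ‖f‖ :=
  calc ‖f.comp L‖ ≤ ‖f‖ * ‖L‖ := f.opNorm_comp_le L
    _ ≤ ‖f‖ * C := by gcongr; exact L.opNorm_le_bound hC hL
    _ = C * ‖f‖ := mul_comm _ _

lemma norm_apply_le_of_forall_norm_comp_le {L : E →L[ℝ] F} {C : ℝ} (hC : 0 ≤ C)
    (hL : ∀ f : F →L[ℝ] ℝ, ‖f.comp L‖ ≤ C * ‖f‖) (x : E) : ‖L x‖ ≤ C * ‖x‖ :=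
  NormedSpace.norm_le_dual_bound ℝ _ (by positivity) fun f =>
    calc ‖f (L x)‖ ≤ ‖f.comp L‖ * ‖x‖ := (f.comp L).le_opNorm x
      _ ≤ C * ‖f‖ * ‖x‖ := by gcongr; exact hL f
      _ = C * ‖x‖ * ‖f‖ := by ring

lemma sum_exp_mul_norm_comp_le {N α β ε : ℝ} (hN : 0 ≤ N) (hε : 0 < ε)
    (hT : ∀ n m : ℕ, n ≤ m → ∀ x : E,
      ‖T m n x‖ ≤ N * exp (-α * ((m : ℝ) - n)) * exp (β * n) * ‖x‖)
    (m : ℕ) (f : F →L[ℝ] ℝ) :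
    ∑ k ∈ range (m + 1), exp ((α + β) * ((m : ℝ) - k)) * ‖f.comp (T m k)‖
      ≤ N * (1 + 1 / ε) * exp ((β + ε) * m) * ‖f‖ := by
  have h_term : ∀ k ∈ range (m + 1),
      exp ((α + β) * ((m : ℝ) - k)) * ‖f.comp (T m k)‖ ≤ N * exp (β * m) * ‖f‖ := by
    intro k hk
    have hkm : k ≤ m := Nat.lt_succ_iff.mp (mem_range.mp hk)
    have h_comp := norm_comp_le_of_forall_norm_apply_le (by positivity) (hT k m hkm) f
    have h_weight : exp ((α + β) * ((m : ℝ) - k)) * exp (-α * ((m : ℝ) - k)) * exp (β * k)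
        = exp (β * m) := by
      rw [← exp_add, ← exp_add]; ring_nf
    calc exp ((α + β) * ((m : ℝ) - k)) * ‖f.comp (T m k)‖
        ≤ exp ((α + β) * ((m : ℝ) - k)) * (N * exp (-α * ((m : ℝ) - k)) * exp (β * k) * ‖f‖) := by
          gcongr
      _ = N * exp (β * m) * ‖f‖ := by rw [← h_weight]; ring
  calc ∑ k ∈ range (m + 1), exp ((α + β) * ((m : ℝ) - k)) * ‖f.comp (T m k)‖
      ≤ ((m : ℝ) + 1) * (N * exp (β * m) * ‖f‖) := by
        simpa using sum_le_sum h_term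
    _ ≤ (1 + 1 / ε) * exp (ε * m) * (N * exp (β * m) * ‖f‖) := by
        gcongr; exact natCast_add_one_le_mul_exp hε m
    _ = N * (1 + 1 / ε) * exp ((β + ε) * m) * ‖f‖ := by
        rw [show (β + ε) * (m : ℝ) = β * m + ε * m by ring, exp_add]; ring

lemma norm_apply_le_of_sum_exp_mul_norm_comp_le {B b c : ℝ} (hB : 0 ≤ B)
    (hT : ∀ m : ℕ, ∀ f : F →L[ℝ] ℝ,
      ∑ k ∈ range (m + 1), exp (b * ((m : ℝ) - k)) * ‖f.comp (T m k)‖ ≤ B * exp (c * m) * ‖f‖)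
    {n m : ℕ} (hnm : n ≤ m) (x : E) :
    ‖T m n x‖ ≤ B * exp (-(b - c) * ((m : ℝ) - n)) * exp (c * n) * ‖x‖ := by
  refine norm_apply_le_of_forall_norm_comp_le (by positivity) (fun f => ?_) x
  have h_term : exp (b * ((m : ℝ) - n)) * ‖f.comp (T m n)‖ ≤ B * exp (c * m) * ‖f‖ :=
    (single_le_sum (f := fun k : ℕ => exp (b * ((m : ℝ) - k)) * ‖f.comp (T m k)‖)
      (fun _ _ => by positivity) (mem_range.mpr (Nat.lt_succ_of_le hnm))).trans (hT m f)
  have h_weight : exp (-(b - c) * ((m : ℝ) - n)) * exp (c * n)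
      = exp (-(b * ((m : ℝ) - n))) * exp (c * m) := by
    rw [← exp_add, ← exp_add]; ring_nf
  calc ‖f.comp (T m n)‖
      = exp (-(b * ((m : ℝ) - n))) * (exp (b * ((m : ℝ) - n)) * ‖f.comp (T m n)‖) := by
        rw [← mul_assoc, ← exp_add, neg_add_cancel, exp_zero, one_mul]
    _ ≤ exp (-(b * ((m : ℝ) - n))) * (B * exp (c * m) * ‖f‖) := by gcongr
    _ = B * exp (-(b - c) * ((m : ℝ) - n)) * exp (c * n) * ‖f‖ := by
        linear_combination (-(B * ‖f‖)) * h_weight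

end

theorem stmt16_general {X : Type*} [NormedAddCommGroup X] [NormedSpace ℝ X]
    (A : ℕ → X →L[ℝ] X) :
    (∃ N α β : ℝ, 1 ≤ N ∧ 0 < α ∧ 0 ≤ β ∧ β < α ∧
      ∀ n m : ℕ, n ≤ m → ∀ x : X,
        ‖evol A m n x‖ ≤ N * Real.exp (-α * ((m : ℝ) - n)) * Real.exp (β * n) * ‖x‖) ↔
    (∃ B b c : ℝ, 1 ≤ B ∧ 0 < b ∧ 0 ≤ c ∧ 2 * c < b ∧
      ∀ m : ℕ, ∀ xs : X →L[ℝ] ℝ,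
        ∑ k ∈ Finset.range (m + 1),
          Real.exp (b * ((m : ℝ) - k)) * ‖xs.comp (evol A m k)‖
            ≤ B * Real.exp (c * m) * ‖xs‖) := by
  constructor
  · rintro ⟨N, α, β, hN, hα, hβ, hβα, h_ses⟩
    have hε : 0 < (α - β) / 4 := by linarith
    refine ⟨N * (1 + 1 / ((α - β) / 4)), α + β, β + (α - β) / 4,
      one_le_mul_of_one_le_of_one_le hN (le_add_of_nonneg_right (by positivity)),
      by linarith, by linarith, by linarith, sum_exp_mul_norm_comp_le (by linarith) hε h_ses⟩
  · rintro ⟨B, b, c, hB, -, hc, hcb, h_sum⟩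
    exact ⟨B, b - c, c, hB, by linarith, hc, by linarith,
      fun n m hnm => norm_apply_le_of_sum_exp_mul_norm_comp_le (by linarith) h_sum hnm⟩

theorem stmt16 {X : Type*} [NormedAddCommGroup X] [NormedSpace ℝ X] [CompleteSpace X]
    (A : ℕ → X →L[ℝ] X) :
    (∃ N α β : ℝ, 1 ≤ N ∧ 0 < α ∧ 0 ≤ β ∧ β < α ∧
      ∀ n m : ℕ, n ≤ m → ∀ x : X,
        ‖evol A m n x‖ ≤ N * Real.exp (-α * ((m : ℝ) - n)) * Real.exp (β * n) * ‖x‖) ↔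
    (∃ B b c : ℝ, 1 ≤ B ∧ 0 < b ∧ 0 ≤ c ∧ 2 * c < b ∧
      ∀ m : ℕ, ∀ xs : X →L[ℝ] ℝ,
        ∑ k ∈ Finset.range (m + 1),
          Real.exp (b * ((m : ℝ) - k)) * ‖xs.comp (evol A m k)‖
            ≤ B * Real.exp (c * m) * ‖xs‖) :=
  stmt16_general A
end

section
/- For the scalar system A(n) = c·a_n·I on a nonzero Banach space, where a_n = e^{-n} for n even and a_n = e^{n+1} for n odd, and c > 0, the system is NOT uniformly exponentially stable. -/
open scoped BigOperators

theorem stmt17 {X : Type*} [NormedAddCommGroup X] [NormedSpace ℝ X] [CompleteSpace X]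
    [Nontrivial X] (c : ℝ) (hc : 0 < c)
    (A : ℕ → X →L[ℝ] X)
    (hA : A = fun n : ℕ =>
      (c * (if Even n then Real.exp (-(n : ℝ)) else Real.exp ((n : ℝ) + 1))) • (1 : X →L[ℝ] X)) :
    ¬ ∃ N α : ℝ, 1 ≤ N ∧ 0 < α ∧
      ∀ n m : ℕ, n ≤ m → ∀ x : X,
        ‖evol A m n x‖ ≤ N * Real.exp (-α * ((m : ℝ) - n)) * ‖x‖ := by
  rintro ⟨N, α, hN, hα, h⟩
  obtain ⟨x, hx⟩ := exists_ne (0 : X)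
  have hxn : 0 < ‖x‖ := norm_pos_iff.mpr hx
  obtain ⟨k, hk⟩ := exists_nat_gt (N * Real.exp (-α) / c)
  set n := 2 * k with hn
  have hev : evol A (n + 1) n = A (n + 1) := by
    simp [evol, List.range_succ]; rfl
  have hb := h n (n + 1) (Nat.le_succ n) x
  rw [hev] at hb
  have hodd : ¬ Even (n + 1) := by
    simp [hn, Nat.even_add_one, parity_simps]
  have hAx : A (n + 1) x = (c * Real.exp ((n : ℝ) + 1 + 1)) • x := by
    rw [hA]; simp [hodd]
  rw [hAx, norm_smul] at hb
  have hcast : -α * (((n : ℕ) + 1 : ℕ) - (n : ℝ)) = -α := by push_cast; ring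
  rw [hcast] at hb
  have h1 : c * Real.exp ((n : ℝ) + 2) ≤ N * Real.exp (-α) := by
    have := hb
    rw [Real.norm_eq_abs, abs_of_pos (by positivity)] at this
    have h2 : (n : ℝ) + 1 + 1 = (n : ℝ) + 2 := by ring
    rw [h2] at this
    exact le_of_mul_le_mul_right this hxn
  -- but c * exp(n+2) > c * k > N * exp (-α)
  have hkc : N * Real.exp (-α) < c * k := by
    rw [div_lt_iff₀ hc] at hk
    linarith [hk]
  have hexp : (k : ℝ) < Real.exp ((n : ℝ) + 2) := by
    have h3 : (k : ℝ) < (n : ℝ) + 2 + 1 := by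
      have : (n : ℝ) = 2 * k := by push_cast [hn]; ring
      nlinarith [Nat.cast_nonneg (α := ℝ) k]
    calc (k : ℝ) < (n : ℝ) + 2 + 1 := h3
    _ ≤ Real.exp ((n : ℝ) + 2) := Real.add_one_le_exp _
  nlinarith
end

section
/- For the scalar system A(n) = c·a_n·I, where a_n = e^{-n} for n even and a_n = e^{n+1} for n odd, and c ∈ (0, 1/e), the estimate ‖A_m^n x‖ ≤ e^{n+1} e^{-α(m-n)} ‖x‖ holds for all m ≥ n and x ∈ X with α = ln(1/(ce)) > 0; hence the system is nonuniformly exponentially stable. -/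
open scoped BigOperators

/-- The integer exponent `log a_j`. -/
def bexp (j : ℕ) : ℤ := if Even j then -(j : ℤ) else (j : ℤ) + 1

lemma sum_bexp_le (n : ℕ) : ∀ k : ℕ,
    ((Even (n + k)) → (∑ j ∈ Finset.Ioc n (n + k), bexp j) ≤ 0) ∧
    (∑ j ∈ Finset.Ioc n (n + k), bexp j) ≤ (n : ℤ) + k + 1 := by
  intro k
  induction k with
  | zero =>
    simp
    positivity
  | succ k ih =>
    rw [← Nat.add_assoc]
    have hs : (∑ j ∈ Finset.Ioc n (n + k + 1), bexp j)
        = (∑ j ∈ Finset.Ioc n (n + k), bexp j) + bexp (n + k + 1) :=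
      Finset.sum_Ioc_succ_top (by omega) bexp
    by_cases hpar : Even (n + k + 1)
    · have hb : bexp (n + k + 1) = -((n : ℤ) + k + 1) := by
        simp only [bexp, if_pos hpar]; push_cast; ring
      constructor
      · intro _
        rw [hs, hb]
        have := ih.2
        omega
      · rw [hs, hb]
        have := ih.2
        push_cast
        omega
    · have heven : Even (n + k) := by
        rcases Nat.even_or_odd (n + k) with h | h
        · exact h
        · exact absurd h.add_one hpar
      have hb : bexp (n + k + 1) = (n : ℤ) + k + 2 := by
        simp only [bexp, if_neg hpar]; push_cast; ring
      constructor
      · intro h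
        exact absurd h hpar
      · rw [hs, hb]
        have := ih.1 heven
        push_cast
        omega

theorem stmt18 {X : Type*} [NormedAddCommGroup X] [NormedSpace ℝ X] [CompleteSpace X]
    (c : ℝ) (hc : 0 < c) (hc' : c < 1 / Real.exp 1)
    (A : ℕ → X →L[ℝ] X)
    (hA : A = fun n : ℕ =>
      (c * (if Even n then Real.exp (-(n : ℝ)) else Real.exp ((n : ℝ) + 1))) • (1 : X →L[ℝ] X)) :
    (∀ n m : ℕ, n ≤ m → ∀ x : X,
      ‖evol A m n x‖ ≤ Real.exp ((n : ℝ) + 1) *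
        Real.exp (-(Real.log (1 / (c * Real.exp 1))) * ((m : ℝ) - n)) * ‖x‖) ∧
    (∃ α : ℝ, ∃ N : ℝ → ℝ, 0 < α ∧ MonotoneOn N (Set.Ici 0) ∧
      (∀ t : ℝ, 0 ≤ t → 1 ≤ N t) ∧
      ∀ n m : ℕ, n ≤ m → ∀ x : X,
        ‖evol A m n x‖ ≤ N n * Real.exp (-α * ((m : ℝ) - n)) * ‖x‖) := by
  -- the scalar of A j
  set s : ℕ → ℝ := fun j => c * (if Even j then Real.exp (-(j : ℝ)) else Real.exp ((j : ℝ) + 1))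
    with hs
  have hA' : ∀ j, A j = s j • (1 : X →L[ℝ] X) := fun j => by rw [hA]
  have hce : 0 < c * Real.exp 1 := by positivity
  have hce1 : c * Real.exp 1 < 1 := (lt_div_iff₀ (Real.exp_pos 1)).mp hc'
  -- structural formula for evol
  have hevol : ∀ n k : ℕ, evol A (n + k) n = (∏ j ∈ Finset.Ioc n (n + k), s j) • 1 := by
    intro n k
    induction k with
    | zero => simp [evol]
    | succ k ih =>
      have hr : n + (k + 1) - n = (n + k - n) + 1 := by omega
      have hstep : evol A (n + (k+1)) n = A (n + (n + k - n) + 1) ∘L evol A (n + k) n := by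
        simp only [evol, hr, List.range_succ, List.map_append, List.foldl_append,
          List.map_cons, List.map_nil, List.foldl_cons, List.foldl_nil]
      have hix : n + (n + k - n) + 1 = n + k + 1 := by omega
      rw [hstep, ih, hix, hA' (n + k + 1),
        show n + (k + 1) = (n + k) + 1 from rfl,
        Finset.prod_Ioc_succ_top (by omega) s,
        ContinuousLinearMap.smul_comp, ContinuousLinearMap.comp_smul]
      simp [smul_smul, mul_comm, ContinuousLinearMap.one_def, ContinuousLinearMap.comp_id]
  -- positivity of scalars
  have hspos : ∀ j, 0 < s j := by
    intro j
    simp only [hs]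
    split <;> positivity
  -- key norm bound
  have key : ∀ n m : ℕ, n ≤ m → ∀ x : X,
      ‖evol A m n x‖ ≤ Real.exp ((n : ℝ) + 1) *
        Real.exp (-(Real.log (1 / (c * Real.exp 1))) * ((m : ℝ) - n)) * ‖x‖ := by
    intro n m hnm x
    obtain ⟨k, rfl⟩ := Nat.exists_eq_add_of_le hnm
    rw [hevol n k]
    have hnorm : ‖((∏ j ∈ Finset.Ioc n (n + k), s j) • (1 : X →L[ℝ] X)) x‖
        = (∏ j ∈ Finset.Ioc n (n + k), s j) * ‖x‖ := by
      rw [ContinuousLinearMap.smul_apply, norm_smul, ContinuousLinearMap.one_apply,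
        Real.norm_eq_abs, abs_of_pos (Finset.prod_pos fun j _ => hspos j)]
    rw [hnorm]
    gcongr ?_ * ‖x‖
    -- rewrite the exponential factor
    have hlog : -(Real.log (1 / (c * Real.exp 1))) = Real.log (c * Real.exp 1) := by
      rw [Real.log_div one_ne_zero (ne_of_gt hce), Real.log_one]; ring
    have hrhs : Real.exp (-(Real.log (1 / (c * Real.exp 1))) * (((n + k : ℕ) : ℝ) - n))
        = (c * Real.exp 1) ^ k := by
      push_cast
      rw [hlog, show (n : ℝ) + (k : ℝ) - (n : ℝ) = (k : ℝ) by ring, mul_comm,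
        Real.exp_nat_mul, Real.exp_log hce]
    rw [hrhs]
    -- product of scalars
    have hprod : (∏ j ∈ Finset.Ioc n (n + k), s j)
        = c ^ k * ∏ j ∈ Finset.Ioc n (n + k),
            (if Even j then Real.exp (-(j : ℝ)) else Real.exp ((j : ℝ) + 1)) := by
      rw [hs, Finset.prod_mul_distrib, Finset.prod_const, Nat.card_Ioc]
      congr 2
      omega
    rw [hprod]
    have hexp : (∏ j ∈ Finset.Ioc n (n + k),
        (if Even j then Real.exp (-(j : ℝ)) else Real.exp ((j : ℝ) + 1)))
        = Real.exp ((∑ j ∈ Finset.Ioc n (n + k), bexp j : ℤ) : ℝ) :=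
      calc (∏ j ∈ Finset.Ioc n (n + k),
            (if Even j then Real.exp (-(j : ℝ)) else Real.exp ((j : ℝ) + 1)))
          = ∏ j ∈ Finset.Ioc n (n + k), Real.exp ((bexp j : ℝ)) :=
            Finset.prod_congr rfl (fun j _ => by
              by_cases h : Even j <;> simp [bexp, h])
        _ = Real.exp (∑ j ∈ Finset.Ioc n (n + k), ((bexp j : ℤ) : ℝ)) :=
            (Real.exp_sum _ _).symm
        _ = Real.exp ((∑ j ∈ Finset.Ioc n (n + k), bexp j : ℤ) : ℝ) := by push_cast; ring_nf
    rw [hexp]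
    have hsum : ((∑ j ∈ Finset.Ioc n (n + k), bexp j : ℤ) : ℝ) ≤ (n : ℝ) + 1 + k := by
      have h2 : ((∑ j ∈ Finset.Ioc n (n + k), bexp j : ℤ) : ℝ)
          ≤ (((n : ℤ) + k + 1 : ℤ) : ℝ) := by exact_mod_cast (sum_bexp_le n k).2
      push_cast at h2 ⊢
      linarith
    have hek : Real.exp ((n : ℝ) + 1 + k) = Real.exp ((n : ℝ) + 1) * Real.exp 1 ^ k := by
      rw [Real.exp_add, ← Real.exp_nat_mul, mul_one]
    calc c ^ k * Real.exp ((∑ j ∈ Finset.Ioc n (n + k), bexp j : ℤ) : ℝ)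
        ≤ c ^ k * Real.exp ((n : ℝ) + 1 + k) := by
          have := Real.exp_le_exp.mpr hsum
          have hck : (0:ℝ) ≤ c ^ k := by positivity
          nlinarith [Real.exp_pos (((∑ j ∈ Finset.Ioc n (n + k), bexp j : ℤ) : ℝ))]
      _ = Real.exp ((n : ℝ) + 1) * (c ^ k * Real.exp 1 ^ k) := by rw [hek]; ring
      _ = Real.exp ((n : ℝ) + 1) * (c * Real.exp 1) ^ k := by rw [mul_pow]
  refine ⟨key, Real.log (1 / (c * Real.exp 1)), fun t => Real.exp (t + 1), ?_, ?_, ?_, ?_⟩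
  · apply Real.log_pos
    rw [lt_div_iff₀ hce, one_mul]
    exact hce1
  · intro a _ b _ hab
    exact Real.exp_le_exp.mpr (by linarith)
  · intro t ht
    calc (1 : ℝ) = Real.exp 0 := (Real.exp_zero).symm
      _ ≤ Real.exp (t + 1) := Real.exp_le_exp.mpr (by linarith)
  · intro n m hnm x
    exact key n m hnm x
end

section
/- For the scalar system A(n) = c·a_n·I, where a_n = e^{-n} for n even and a_n = e^{n+1} for n odd, on a nonzero Banach space, the system is strongly exponentially stable if and only if c ∈ (0, 1/e²). -/
open scoped BigOperators

/-!
Writing `a_n = exp (e n)`, the exponents telescope: `e (n + 1) = P (n + 1) - P n` for the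
potential `P n = 0` (`n` even), `P n = n + 1` (`n` odd), so
`‖A_{n+d}^n‖ = c ^ d exp (P (n + d) - P n)`.
From `0` to `2j + 1` this is `c ^ (2j + 1) e ^ (2j + 2)`, and an s.e.s. bound
`N e ^ (-α (2j + 1))` forces `log c + 1 + α ≤ 0`; from `2j` to `2j + 1` it is `c e ^ (2j + 2)`,
and the bound `N e ^ (-α) e ^ (2jβ)` forces `β ≥ 1`. Hence `log c ≤ -1 - α < -1 - β ≤ -2`.
Conversely `0 ≤ P n ≤ n + 1` gives the bound with `N = e`, `α = -log c - 1`, `β = 1`.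
-/

open Real Filter Finset

lemma foldl_comp_map_smul_one {𝕜 X : Type*} [NormedField 𝕜] [NormedAddCommGroup X]
    [NormedSpace 𝕜 X] (l : List 𝕜) (a : 𝕜) :
    (l.map fun s => s • (1 : X →L[𝕜] X)).foldl (fun P B => B ∘L P) (a • 1) =
      (a * l.prod) • (1 : X →L[𝕜] X) := by
  induction l generalizing a with
  | nil => simp
  | cons s l ih =>
    have hcomp : (s • (1 : X →L[𝕜] X)) ∘L (a • (1 : X →L[𝕜] X)) = (s * a) • 1 := by
      ext; simp [smul_smul, mul_comm]
    rw [List.map_cons, List.foldl_cons, hcomp, ih, List.prod_cons, mul_comm s, mul_assoc]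

lemma evol_smul_one {X : Type*} [NormedAddCommGroup X] [NormedSpace ℝ X] (s : ℕ → ℝ)
    (m n : ℕ) :
    evol (fun j => s j • (1 : X →L[ℝ] X)) m n = (∏ k ∈ range (m - n), s (n + k + 1)) • 1 := by
  have h := foldl_comp_map_smul_one (X := X) ((List.range (m - n)).map fun k => s (n + k + 1)) 1
  rw [List.map_map, one_smul, one_mul] at h
  exact h

/-- `a_n = exp (parityExponent n)`. -/
noncomputable def parityExponent (n : ℕ) : ℝ := if Even n then -n else n + 1

noncomputable def parityPotential (n : ℕ) : ℝ := if Even n then 0 else n + 1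

lemma parityExponent_succ (n : ℕ) :
    parityExponent (n + 1) = parityPotential (n + 1) - parityPotential n := by
  rcases Nat.even_or_odd n with hn | hn
  · simp [parityExponent, parityPotential, hn, Nat.even_add_one]
  · simp [parityExponent, parityPotential, hn.add_one, Nat.not_even_iff_odd.2 hn]

lemma sum_parityExponent (n d : ℕ) :
    ∑ k ∈ range d, parityExponent (n + k + 1) = parityPotential (n + d) - parityPotential n :=
  (sum_congr rfl fun k _ => parityExponent_succ (n + k)).trans
    (sum_range_sub (fun k => parityPotential (n + k)) d)

lemma parityPotential_nonneg (n : ℕ) : 0 ≤ parityPotential n := by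
  unfold parityPotential; split_ifs <;> positivity

lemma parityPotential_le (n : ℕ) : parityPotential n ≤ n + 1 := by
  unfold parityPotential; split_ifs <;> [positivity; rfl]

lemma parityPotential_two_mul (j : ℕ) : parityPotential (2 * j) = 0 := by
  simp [parityPotential]

lemma parityPotential_two_mul_add_one (j : ℕ) : parityPotential (2 * j + 1) = 2 * j + 2 := by
  simp only [parityPotential, Nat.not_even_bit1, if_false]
  push_cast
  ring

lemma norm_evol_parity_apply {X : Type*} [NormedAddCommGroup X] [NormedSpace ℝ X] {c : ℝ}
    (hc : 0 < c) (n d : ℕ) (x : X) :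
    ‖evol (fun j => (c * exp (parityExponent j)) • (1 : X →L[ℝ] X)) (n + d) n x‖ =
      c ^ d * exp (parityPotential (n + d) - parityPotential n) * ‖x‖ := by
  rw [evol_smul_one, Nat.add_sub_cancel_left, prod_mul_distrib, prod_const, card_range,
    ← exp_sum, sum_parityExponent, smul_apply, norm_smul,
    one_apply_eq_self, norm_of_nonneg (by positivity)]

lemma nonpos_of_forall_mul_le {ι : Type*} {l : Filter ι} [l.NeBot] {u : ι → ℝ}
    (hu : Tendsto u l atTop) {t C : ℝ} (h : ∀ j, t * u j ≤ C) : t ≤ 0 := by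
  by_contra! ht
  obtain ⟨j, hj⟩ := ((hu.const_mul_atTop ht).eventually_gt_atTop C).exists
  exact (h j).not_gt hj

lemma lt_exp_neg_two_of_exponential_bound {c N α β : ℝ} (hc : 0 < c) (hβα : β < α)
    (h : ∀ n d : ℕ, c ^ d * exp (parityPotential (n + d) - parityPotential n) ≤
      N * exp (-α * d) * exp (β * n)) : c < exp (-2) := by
  have hN : 0 < N := one_pos.trans_le (by simpa using h 0 0)
  have hlog : ∀ n d : ℕ, d * log c + (parityPotential (n + d) - parityPotential n) ≤
      log N - α * d + β * n := by
    intro n d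
    have := log_le_log (by positivity) (h n d)
    rwa [log_mul (by positivity) (exp_ne_zero _), log_pow, log_exp, log_mul (by positivity)
      (exp_ne_zero _), log_mul hN.ne' (exp_ne_zero _), log_exp, log_exp, neg_mul,
      ← sub_eq_add_neg] at this
  have hα : log c + 1 + α ≤ 0 := by
    have hu : Tendsto (fun j : ℕ => (2 * j + 1 : ℝ)) atTop atTop :=
      tendsto_atTop_add_const_right _ 1 (tendsto_natCast_atTop_atTop.const_mul_atTop two_pos)
    refine nonpos_of_forall_mul_le hu (C := log N - 1) fun j => ?_
    have := hlog 0 (2 * j + 1)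
    rw [zero_add, parityPotential_two_mul_add_one, parityPotential_two_mul 0] at this
    push_cast at this
    linarith
  have hβ : 1 - β ≤ 0 := by
    have hu : Tendsto (fun j : ℕ => (2 * j : ℝ)) atTop atTop :=
      tendsto_natCast_atTop_atTop.const_mul_atTop two_pos
    refine nonpos_of_forall_mul_le hu (C := log N - α - 2 - log c) fun j => ?_
    have := hlog (2 * j) 1
    rw [parityPotential_two_mul_add_one, parityPotential_two_mul] at this
    push_cast at this
    linarith
  rw [← exp_log hc, exp_lt_exp]
  linarith

lemma pow_mul_exp_parityPotential_le {c : ℝ} (hc : 0 < c) (n d : ℕ) :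
    c ^ d * exp (parityPotential (n + d) - parityPotential n) ≤
      exp 1 * exp (-(-log c - 1) * d) * exp (1 * n) := by
  rw [← exp_log hc, ← exp_nat_mul, log_exp, ← exp_add, ← exp_add, ← exp_add, exp_le_exp]
  have := parityPotential_le (n + d)
  have := parityPotential_nonneg n
  push_cast at *
  linarith

theorem stmt19_general {X : Type*} [NormedAddCommGroup X] [NormedSpace ℝ X]
    [Nontrivial X] (c : ℝ) (hc : 0 < c)
    (A : ℕ → X →L[ℝ] X)
    (hA : A = fun n : ℕ =>
      (c * (if Even n then Real.exp (-(n : ℝ)) else Real.exp ((n : ℝ) + 1))) • (1 : X →L[ℝ] X)) :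
    (∃ N α β : ℝ, 1 ≤ N ∧ 0 < α ∧ 0 ≤ β ∧ β < α ∧
      ∀ n m : ℕ, n ≤ m → ∀ x : X,
        ‖evol A m n x‖ ≤ N * Real.exp (-α * ((m : ℝ) - n)) * Real.exp (β * n) * ‖x‖) ↔ c ∈ Set.Ioo (0 : ℝ) (1 / Real.exp 2) := by
  have hA' : A = fun j => (c * exp (parityExponent j)) • (1 : X →L[ℝ] X) := by
    simp only [hA, parityExponent, apply_ite exp]
  subst hA'
  rw [one_div, ← exp_neg]
  constructor
  · rintro ⟨N, α, β, -, -, -, hβα, h⟩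
    refine ⟨hc, lt_exp_neg_two_of_exponential_bound (N := N) hc hβα fun n d => ?_⟩
    obtain ⟨x, hx⟩ := exists_ne (0 : X)
    have := h n (n + d) (Nat.le_add_right n d) x
    rw [norm_evol_parity_apply hc, Nat.cast_add, add_sub_cancel_left] at this
    exact le_of_mul_le_mul_right this (norm_pos_iff.2 hx)
  · rintro ⟨-, hc2⟩
    have hlog : log c < -2 := by rwa [← exp_lt_exp, exp_log hc]
    refine ⟨exp 1, -log c - 1, 1, one_le_exp zero_le_one, by linarith, zero_le_one, by linarith,
      fun n m hnm x => ?_⟩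
    obtain ⟨d, rfl⟩ := Nat.exists_eq_add_of_le hnm
    rw [norm_evol_parity_apply hc, Nat.cast_add, add_sub_cancel_left]
    exact mul_le_mul_of_nonneg_right (pow_mul_exp_parityPotential_le hc n d) (norm_nonneg x)

theorem stmt19 {X : Type*} [NormedAddCommGroup X] [NormedSpace ℝ X] [CompleteSpace X]
    [Nontrivial X] (c : ℝ) (hc : 0 < c)
    (A : ℕ → X →L[ℝ] X)
    (hA : A = fun n : ℕ =>
      (c * (if Even n then Real.exp (-(n : ℝ)) else Real.exp ((n : ℝ) + 1))) • (1 : X →L[ℝ] X)) :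
    (∃ N α β : ℝ, 1 ≤ N ∧ 0 < α ∧ 0 ≤ β ∧ β < α ∧
      ∀ n m : ℕ, n ≤ m → ∀ x : X,
        ‖evol A m n x‖ ≤ N * Real.exp (-α * ((m : ℝ) - n)) * Real.exp (β * n) * ‖x‖) ↔ c ∈ Set.Ioo (0 : ℝ) (1 / Real.exp 2) :=
  stmt19_general c hc A hA
end
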